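/- arXiv:2403.01549 — 2 statements merged into one kernel-verified Lean document; each statement's English description precedes it below -/
import Mathlib

section
/- For a real n×d matrix Z, the matrix ZZ^T is symmetric positive semidefinite, and for any λ > 0 the function Z ↦ log det(I + λ ZZ^T) equals ∑_i log(1 + λ σ_i^2) where σ_i are the singular values of Z; consequently it is maximized, subject to the Frobenius-norm constraint ‖Z‖_F^2 = c, when all nonzero singular values are equal. -/
open Finset Matrix

/-! Diagonalising `Z Zᵀ` turns `log det (1 + λ Z Zᵀ)` into `∑ᵢ log (1 + λ μᵢ)` over its
eigenvalues `μᵢ ≥ 0`, which sum to `c` and of which at most `rank Z ≤ min n d =: r` are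
nonzero. Pad the nonzero eigenvalues with zeros to `r` values of mean `c / r`. The tangent line
at `c / r` of the concave function `x ↦ log (1 + λ x)` bounds every term, and being affine it
sums over the `r` values to exactly `r log (1 + λ c / r)`. Strict concavity forces every nonzero
eigenvalue to equal `c / r` in the equality case. -/

namespace Real

lemma log_lt_log_add_sub_div {x b : ℝ} (hx : 0 < x) (hb : 0 < b) (hxb : x ≠ b) :
    log x < log b + (x - b) / b := by
  have h := log_lt_sub_one_of_pos (div_pos hx hb) (by rwa [ne_eq, div_eq_one_iff_eq hb.ne'])
  rw [log_div hx.ne' hb.ne', div_sub_one hb.ne'] at h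
  linarith

lemma log_le_log_add_sub_div {x b : ℝ} (hx : 0 < x) (hb : 0 < b) :
    log x ≤ log b + (x - b) / b := by
  rcases eq_or_ne x b with rfl | hxb
  · simp
  · exact (log_lt_log_add_sub_div hx hb hxb).le

end Real

section TangentLine

open Real

variable {lam a x : ℝ}

lemma log_one_add_mul_le_tangent (hlam : 0 ≤ lam) (ha : 0 ≤ a) (hx : 0 ≤ x) :
    log (1 + lam * x) ≤ log (1 + lam * a) + lam * (x - a) / (1 + lam * a) := by
  convert log_le_log_add_sub_div (x := 1 + lam * x) (b := 1 + lam * a)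
    (by positivity) (by positivity) using 2
  ring

lemma log_one_add_mul_lt_tangent (hlam : 0 < lam) (ha : 0 ≤ a) (hx : 0 ≤ x) (hxa : x ≠ a) :
    log (1 + lam * x) < log (1 + lam * a) + lam * (x - a) / (1 + lam * a) := by
  convert log_lt_log_add_sub_div (x := 1 + lam * x) (b := 1 + lam * a)
    (by positivity) (by positivity)
    (by simpa [hlam.ne'] using hxa) using 2
  ring

variable {ι : Type*} {t : ι → ℝ} {r : ℝ}

lemma sum_tangent_log_one_add_mul_le {s : Finset ι} (hlam : 0 ≤ lam) (ha : 0 ≤ a)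
    (hsum : ∑ i ∈ s, t i = r * a) (hcard : #s ≤ r) :
    ∑ i ∈ s, (log (1 + lam * a) + lam * (t i - a) / (1 + lam * a)) ≤
      r * log (1 + lam * a) := by
  -- the `r - #s` padding zeros contribute the tangent's value at `0`, which is nonnegative
  have htangent_zero : 0 ≤ log (1 + lam * a) + lam * (0 - a) / (1 + lam * a) := by
    simpa using log_one_add_mul_le_tangent hlam ha le_rfl
  have hsum_tangent :
      ∑ i ∈ s, (log (1 + lam * a) + lam * (t i - a) / (1 + lam * a)) =
        r * log (1 + lam * a) -
          (r - #s) * (log (1 + lam * a) + lam * (0 - a) / (1 + lam * a)) := by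
    simp only [sum_add_distrib, sum_const, nsmul_eq_mul, ← sum_div, ← mul_sum, sum_sub_distrib,
      hsum]
    ring
  rw [hsum_tangent]
  linarith [mul_nonneg (sub_nonneg.2 hcard) htangent_zero]

lemma sum_filter_ne_zero_log_one_add_mul (s : Finset ι) (t : ι → ℝ) (lam : ℝ) :
    ∑ i ∈ s with t i ≠ 0, log (1 + lam * t i) = ∑ i ∈ s, log (1 + lam * t i) :=
  sum_filter_of_ne fun i _ h ht0 => h (by rw [ht0, mul_zero, add_zero, log_one])

variable [Fintype ι]

lemma sum_log_one_add_mul_le (hlam : 0 ≤ lam) (ha : 0 ≤ a) (ht : ∀ i, 0 ≤ t i)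
    (hsum : ∑ i, t i = r * a) (hcard : #{i | t i ≠ 0} ≤ r) :
    ∑ i, log (1 + lam * t i) ≤ r * log (1 + lam * a) := by
  rw [← sum_filter_ne_zero] at hsum
  rw [← sum_filter_ne_zero_log_one_add_mul]
  exact (sum_le_sum fun i _ => log_one_add_mul_le_tangent hlam ha (ht i)).trans
    (sum_tangent_log_one_add_mul_le hlam ha hsum hcard)

lemma sum_log_one_add_mul_eq_iff (hlam : 0 < lam) (ha : 0 ≤ a) (ht : ∀ i, 0 ≤ t i)
    (hsum : ∑ i, t i = r * a) (hcard : #{i | t i ≠ 0} ≤ r) :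
    ∑ i, log (1 + lam * t i) = r * log (1 + lam * a) ↔ ∀ i, t i = a ∨ t i = 0 := by
  rw [← sum_filter_ne_zero] at hsum
  rw [← sum_filter_ne_zero_log_one_add_mul]
  constructor
  · intro heq
    by_contra! ⟨i, hia, hi0⟩
    have hlt := sum_lt_sum (s := {i | t i ≠ 0})
      (fun j _ => log_one_add_mul_le_tangent hlam.le ha (ht j))
      ⟨i, by simpa using hi0, log_one_add_mul_lt_tangent hlam ha (ht i) hia⟩
    linarith [sum_tangent_log_one_add_mul_le hlam.le ha hsum hcard]
  · intro h
    have hsupp : ∀ i ∈ ({i | t i ≠ 0} : Finset ι), t i = a :=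
      fun i hi => (h i).resolve_right (mem_filter.1 hi).2
    rw [sum_congr rfl hsupp, sum_const, nsmul_eq_mul] at hsum
    rw [sum_congr rfl fun i hi => by rw [hsupp i hi], sum_const, nsmul_eq_mul]
    rcases mul_eq_mul_right_iff.1 hsum with hcard_eq | rfl
    · rw [hcard_eq]
    · simp

end TangentLine

theorem Matrix.IsHermitian.det_one_add_smul {𝕜 n : Type*} [RCLike 𝕜] [Fintype n]
    [DecidableEq n] {A : Matrix n n 𝕜} (hA : A.IsHermitian) (t : ℝ) :
    (1 + t • A).det = ∏ i, ((1 + t * hA.eigenvalues i : ℝ) : 𝕜) := by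
  rw [show 1 + t • A = cfc (fun x : ℝ => 1 + t * x) A by
    rw [cfc_add .., cfc_const_mul .., cfc_const_one .., cfc_id' ..], hA.cfc_eq, IsHermitian.cfc,
    det_map, det_diagonal]
  rfl

lemma Matrix.card_eigenvalues_self_mul_transpose_ne_zero_le {m p : Type*} [Fintype m]
    [Fintype p] [DecidableEq m] (Z : Matrix m p ℝ) (hZ : (Z * Zᵀ).IsHermitian) :
    #{i | hZ.eigenvalues i ≠ 0} ≤ min (Fintype.card m) (Fintype.card p) := by
  rw [← Fintype.card_subtype, ← hZ.rank_eq_card_non_zero_eigs, rank_self_mul_transpose]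
  exact le_min Z.rank_le_card_height Z.rank_le_card_width

theorem logdet_one_add_smul_gram_general {n d : ℕ} (hn : 0 < n) (hd : 0 < d)
    (Z : Matrix (Fin n) (Fin d) ℝ) (lam c : ℝ) (hlam : 0 < lam)
    (hherm : (Z * Zᵀ).IsHermitian)
    (htr : (Z * Zᵀ).trace = c) :
    (Z * Zᵀ).PosSemidef ∧
    Real.log (1 + lam • (Z * Zᵀ)).det = ∑ i, Real.log (1 + lam * hherm.eigenvalues i) ∧
    (Real.log (1 + lam • (Z * Zᵀ)).det ≤
        (min n d : ℝ) * Real.log (1 + lam * c / (min n d : ℝ)) ∧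
      (Real.log (1 + lam • (Z * Zᵀ)).det =
          (min n d : ℝ) * Real.log (1 + lam * c / (min n d : ℝ)) ↔
        ∀ i, hherm.eigenvalues i = c / (min n d : ℝ) ∨ hherm.eigenvalues i = 0)) := by
  have hpsd : (Z * Zᵀ).PosSemidef := by simpa using posSemidef_self_mul_conjTranspose Z
  have hnonneg : ∀ i, 0 ≤ hherm.eigenvalues i := hpsd.eigenvalues_nonneg
  have hr : 0 < min (n : ℝ) d := lt_min (by exact_mod_cast hn) (by exact_mod_cast hd)
  have ha : 0 ≤ c / min (n : ℝ) d := div_nonneg (htr ▸ hpsd.trace_nonneg) hr.le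
  have hsum : ∑ i, hherm.eigenvalues i = min (n : ℝ) d * (c / min (n : ℝ) d) := by
    rw [mul_div_cancel₀ _ hr.ne', ← htr, hherm.trace_eq_sum_eigenvalues]
    simp
  have hcard : (#{i | hherm.eigenvalues i ≠ 0} : ℝ) ≤ min (n : ℝ) d := by
    rw [← Nat.cast_min]
    exact_mod_cast Z.card_eigenvalues_self_mul_transpose_ne_zero_le hherm |>.trans_eq (by simp)
  have hlogdet : Real.log (1 + lam • (Z * Zᵀ)).det =
      ∑ i, Real.log (1 + lam * hherm.eigenvalues i) := by
    simp only [hherm.det_one_add_smul, RCLike.ofReal_real_eq_id, id_eq]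
    exact Real.log_prod fun i _ => by have := hnonneg i; positivity
  rw [hlogdet, mul_div_assoc]
  exact ⟨hpsd, rfl, sum_log_one_add_mul_le hlam.le ha hnonneg hsum hcard,
    sum_log_one_add_mul_eq_iff hlam ha hnonneg hsum hcard⟩

/-- `Z Zᵀ` is symmetric PSD; `log det (I + λ Z Zᵀ) = ∑ᵢ log (1 + λ σᵢ²)` where
`σᵢ²` are the eigenvalues of `Z Zᵀ` (squares of the singular values of `Z`); and subject to
the Frobenius constraint `tr(Z Zᵀ) = c > 0`, it is maximized when all nonzero singular
values are equal (to `√(c/r)` with `r = min n d`). -/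
theorem logdet_one_add_smul_gram {n d : ℕ} (hn : 0 < n) (hd : 0 < d)
    (Z : Matrix (Fin n) (Fin d) ℝ) (lam c : ℝ) (hlam : 0 < lam) (hc : 0 < c)
    (hherm : (Z * Zᵀ).IsHermitian)
    (htr : (Z * Zᵀ).trace = c) :
    (Z * Zᵀ).PosSemidef ∧
    Real.log (1 + lam • (Z * Zᵀ)).det = ∑ i, Real.log (1 + lam * hherm.eigenvalues i) ∧
    (Real.log (1 + lam • (Z * Zᵀ)).det ≤
        (min n d : ℝ) * Real.log (1 + lam * c / (min n d : ℝ)) ∧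
      (Real.log (1 + lam • (Z * Zᵀ)).det =
          (min n d : ℝ) * Real.log (1 + lam * c / (min n d : ℝ)) ↔
        ∀ i, hherm.eigenvalues i = c / (min n d : ℝ) ∨ hherm.eigenvalues i = 0)) :=
  logdet_one_add_smul_gram_general hn hd Z lam c hlam hherm htr
end

section
/- If two unit-norm vectors z1, z2 ∈ ℝ^d satisfy ‖z1 − z2‖² = 0 (the invariance term of Eq. 14 is minimized) and z1 = f1(c, c̄1), z2 = f2(c, c̄2) where each zi is a function of a shared semantic variable c and view-specific noise c̄i with c̄1, c̄2 independent given c, then z1 = z2 is a function of c alone almost surely. -/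
/-!
On the support of `p`, vanishing invariance loss gives `z1 = z2`. Take two outcomes `ω, ω'` of
positive weight with the same content `c`. Conditional independence makes the mixed latent
`(c̄1 ω, c̄2 ω', c ω)` occur with positive weight at some `ω''`, whence
`z1 ω = f1 (c, c̄1 ω) = z1 ω'' = z2 ω'' = f2 (c, c̄2 ω') = z2 ω' = z1 ω'`.
So `z1` is constant on the fibres of `c` over the support and factors through `c`.
-/

open Finset Real

variable {Ω : Type*} [Fintype Ω]

/-- Distribution of a random variable `X` under weights `p`. -/
noncomputable def distOf {S : Type*} [Fintype S] [DecidableEq S]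
    (p : Ω → ℝ) (X : Ω → S) (s : S) : ℝ :=
  ∑ ω, if X ω = s then p ω else 0

/-- Shannon entropy of a random variable. -/
noncomputable def entropy {S : Type*} [Fintype S] [DecidableEq S]
    (p : Ω → ℝ) (X : Ω → S) : ℝ :=
  ∑ s, Real.negMulLog (distOf p X s)

/-- Mutual information `I(X;Y) = H(X) + H(Y) - H(X,Y)`. -/
noncomputable def mutualInfo {S T : Type*} [Fintype S] [Fintype T] [DecidableEq S] [DecidableEq T]
    (p : Ω → ℝ) (X : Ω → S) (Y : Ω → T) : ℝ :=
  entropy p X + entropy p Y - entropy p (fun ω => (X ω, Y ω))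

/-- Conditional entropy `H(T|X) = H(T,X) - H(X)`. -/
noncomputable def condEntropy {S T : Type*} [Fintype S] [Fintype T] [DecidableEq S] [DecidableEq T]
    (p : Ω → ℝ) (T' : Ω → T) (X : Ω → S) : ℝ :=
  entropy p (fun ω => (T' ω, X ω)) - entropy p X

/-- Conditional mutual information `I(X;T|Z) = H(X|Z) + H(T|Z) - H(X,T|Z)`. -/
noncomputable def condMutualInfo {S T U : Type*} [Fintype S] [Fintype T] [Fintype U]
    [DecidableEq S] [DecidableEq T] [DecidableEq U]
    (p : Ω → ℝ) (X : Ω → S) (T' : Ω → T) (Z : Ω → U) : ℝ :=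
  condEntropy p X Z + condEntropy p T' Z - condEntropy p (fun ω => (X ω, T' ω)) Z

/-- Interaction information `I(X1;X2;T) = I(X1;T) - I(X1;T|X2)`. -/
noncomputable def interactionInfo {S T U : Type*} [Fintype S] [Fintype T] [Fintype U]
    [DecidableEq S] [DecidableEq T] [DecidableEq U]
    (p : Ω → ℝ) (X1 : Ω → S) (X2 : Ω → U) (T' : Ω → T) : ℝ :=
  mutualInfo p X1 T' - condMutualInfo p X1 T' X2

/-- Markov chain `X → Y → Z`: conditional independence of `X` and `Z` given `Y`. -/
def IsMarkov {A B C : Type*} [Fintype A] [Fintype B] [Fintype C]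
    [DecidableEq A] [DecidableEq B] [DecidableEq C]
    (p : Ω → ℝ) (X : Ω → A) (Y : Ω → B) (Z : Ω → C) : Prop :=
  ∀ a b c,
    distOf p (fun ω => (X ω, Y ω, Z ω)) (a, b, c) * distOf p Y b =
      distOf p (fun ω => (X ω, Y ω)) (a, b) * distOf p (fun ω => (Y ω, Z ω)) (b, c)

theorem distOf_nonneg {S : Type*} [Fintype S] [DecidableEq S] {p : Ω → ℝ} (hp : ∀ ω, 0 ≤ p ω)
    (X : Ω → S) (s : S) : 0 ≤ distOf p X s :=
  Finset.sum_nonneg fun ω _ => by split_ifs <;> simp [hp ω]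

theorem distOf_pos_iff {S : Type*} [Fintype S] [DecidableEq S] {p : Ω → ℝ} (hp : ∀ ω, 0 ≤ p ω)
    (X : Ω → S) (s : S) : 0 < distOf p X s ↔ ∃ ω, 0 < p ω ∧ X ω = s := by
  have hterm : ∀ ω ∈ univ, 0 ≤ if X ω = s then p ω else 0 := fun ω _ => by
    split_ifs <;> simp [hp ω]
  rw [distOf, lt_iff_le_and_ne, Ne, eq_comm, Finset.sum_eq_zero_iff_of_nonneg hterm]
  simp only [Finset.sum_nonneg hterm, true_and, Finset.mem_univ, true_implies, not_forall,
    ite_eq_right_iff]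
  refine exists_congr fun ω => ⟨fun ⟨hX, hne⟩ => ⟨(hp ω).lt_of_ne' hne, hX⟩,
    fun ⟨hpos, hX⟩ => ⟨hX, hpos.ne'⟩⟩

theorem eq_of_sum_mul_norm_sub_sq_eq_zero {E : Type*} [NormedAddCommGroup E] {p : Ω → ℝ}
    (hp : ∀ ω, 0 ≤ p ω) {x y : Ω → E} (h : ∑ ω, p ω * ‖x ω - y ω‖ ^ 2 = 0) {ω : Ω}
    (hω : 0 < p ω) : x ω = y ω := by
  have hterm := (Finset.sum_eq_zero_iff_of_nonneg fun ω _ => by positivity [hp ω]).mp h ω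
    (Finset.mem_univ ω)
  simpa [hω.ne', sub_eq_zero] using hterm

def CondIndepGiven {A B C : Type*} [Fintype A] [Fintype B] [Fintype C]
    [DecidableEq A] [DecidableEq B] [DecidableEq C]
    (p : Ω → ℝ) (X : Ω → A) (Y : Ω → B) (Z : Ω → C) : Prop :=
  ∀ a b c,
    distOf p (fun ω => (X ω, Y ω, Z ω)) (a, b, c) * distOf p Z c =
      distOf p (fun ω => (X ω, Z ω)) (a, c) * distOf p (fun ω => (Y ω, Z ω)) (b, c)

theorem CondIndepGiven.exists_pos_mix {A B C : Type*} [Fintype A] [Fintype B] [Fintype C]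
    [DecidableEq A] [DecidableEq B] [DecidableEq C] {p : Ω → ℝ} (hp : ∀ ω, 0 ≤ p ω)
    {X : Ω → A} {Y : Ω → B} {Z : Ω → C} (h : CondIndepGiven p X Y Z) {ω ω' : Ω}
    (hω : 0 < p ω) (hω' : 0 < p ω') (hZ : Z ω = Z ω') :
    ∃ ω'', 0 < p ω'' ∧ X ω'' = X ω ∧ Y ω'' = Y ω' ∧ Z ω'' = Z ω := by
  have hXZ : 0 < distOf p (fun ω => (X ω, Z ω)) (X ω, Z ω) :=
    (distOf_pos_iff hp _ _).mpr ⟨ω, hω, rfl⟩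
  have hYZ : 0 < distOf p (fun ω => (Y ω, Z ω)) (Y ω', Z ω) :=
    (distOf_pos_iff hp _ _).mpr ⟨ω', hω', by rw [hZ]⟩
  have hXYZ := pos_of_mul_pos_left (h (X ω) (Y ω') (Z ω) ▸ mul_pos hXZ hYZ)
    (distOf_nonneg hp Z (Z ω))
  obtain ⟨ω'', hω'', hmix⟩ := (distOf_pos_iff hp _ _).mp hXYZ
  simp only [Prod.mk.injEq] at hmix
  exact ⟨ω'', hω'', hmix⟩

theorem exists_eqOn_comp_of_factorsThrough_domRestrict {α β γ : Type*} [Nonempty γ] {s : Set α}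
    {f : α → β} {z : α → γ} (h : (s.domRestrict z).FactorsThrough (s.domRestrict f)) :
    ∃ g : β → γ, Set.EqOn z (g ∘ f) s := by
  obtain ⟨g, hg⟩ := (Function.factorsThrough_iff _).mp h
  exact ⟨g, fun a ha => congrFun hg ⟨a, ha⟩⟩

theorem invariance_forces_shared_content_general {d : ℕ} {C B1 B2 : Type*}
    [Fintype C] [Fintype B1] [Fintype B2] [DecidableEq C] [DecidableEq B1] [DecidableEq B2]
    (p : Ω → ℝ) (hp : ∀ ω, 0 ≤ p ω)
    (c : Ω → C) (cbar1 : Ω → B1) (cbar2 : Ω → B2)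
    (f1 : C → B1 → EuclideanSpace ℝ (Fin d)) (f2 : C → B2 → EuclideanSpace ℝ (Fin d))
    (z1 z2 : Ω → EuclideanSpace ℝ (Fin d))
    (hz1 : ∀ ω, z1 ω = f1 (c ω) (cbar1 ω)) (hz2 : ∀ ω, z2 ω = f2 (c ω) (cbar2 ω))
    -- conditional independence of the view-specific latents given `c`
    (hci : ∀ (b1 : B1) (b2 : B2) (c0 : C),
      distOf p (fun ω => (cbar1 ω, cbar2 ω, c ω)) (b1, b2, c0) * distOf p c c0 =
        distOf p (fun ω => (cbar1 ω, c ω)) (b1, c0) *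
          distOf p (fun ω => (cbar2 ω, c ω)) (b2, c0))
    -- the invariance term `E ‖z1 - z2‖²` vanishes
    (hinv : ∑ ω, p ω * ‖z1 ω - z2 ω‖ ^ 2 = 0) :
    ∃ g : C → EuclideanSpace ℝ (Fin d),
      ∀ ω, 0 < p ω → z1 ω = g (c ω) ∧ z2 ω = g (c ω) := by
  have hsupp : ∀ ω, 0 < p ω → z1 ω = z2 ω := fun ω hω =>
    eq_of_sum_mul_norm_sub_sq_eq_zero hp hinv hω
  have hfib : ({ω | 0 < p ω}.domRestrict z1).FactorsThrough ({ω | 0 < p ω}.domRestrict c) := by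
    rintro ⟨ω, hω⟩ ⟨ω', hω'⟩ (hc : c ω = c ω')
    obtain ⟨ω'', hω'', h1, h2, h3⟩ := CondIndepGiven.exists_pos_mix hp hci hω hω' hc
    calc z1 ω = f1 (c ω'') (cbar1 ω'') := by rw [hz1, h1, h3]
      _ = f2 (c ω'') (cbar2 ω'') := by rw [← hz1, ← hz2, hsupp ω'' hω'']
      _ = z1 ω' := by rw [h2, h3, hc, ← hz2, hsupp ω' hω']
  obtain ⟨g, hg⟩ := exists_eqOn_comp_of_factorsThrough_domRestrict hfib
  exact ⟨g, fun ω hω => ⟨hg hω, (hsupp ω hω).symm.trans (hg hω)⟩⟩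

/-- if two unit-norm representations `z1 = f1(c, c̄1)`, `z2 = f2(c, c̄2)` of
conditionally independent view-specific latents coincide (the invariance loss vanishes),
then they are (on the support of `p`) a function of the shared semantic `c` alone. -/
theorem invariance_forces_shared_content {d : ℕ} {C B1 B2 : Type*}
    [Fintype C] [Fintype B1] [Fintype B2] [DecidableEq C] [DecidableEq B1] [DecidableEq B2]
    (p : Ω → ℝ) (hp : ∀ ω, 0 ≤ p ω) (hsum : ∑ ω, p ω = 1)
    (c : Ω → C) (cbar1 : Ω → B1) (cbar2 : Ω → B2)
    (f1 : C → B1 → EuclideanSpace ℝ (Fin d)) (f2 : C → B2 → EuclideanSpace ℝ (Fin d))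
    (z1 z2 : Ω → EuclideanSpace ℝ (Fin d))
    (hz1 : ∀ ω, z1 ω = f1 (c ω) (cbar1 ω)) (hz2 : ∀ ω, z2 ω = f2 (c ω) (cbar2 ω))
    (hu1 : ∀ ω, ‖z1 ω‖ = 1) (hu2 : ∀ ω, ‖z2 ω‖ = 1)
    -- conditional independence of the view-specific latents given `c`
    (hci : ∀ (b1 : B1) (b2 : B2) (c0 : C),
      distOf p (fun ω => (cbar1 ω, cbar2 ω, c ω)) (b1, b2, c0) * distOf p c c0 =
        distOf p (fun ω => (cbar1 ω, c ω)) (b1, c0) *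
          distOf p (fun ω => (cbar2 ω, c ω)) (b2, c0))
    -- the invariance term `E ‖z1 - z2‖²` vanishes
    (hinv : ∑ ω, p ω * ‖z1 ω - z2 ω‖ ^ 2 = 0) :
    ∃ g : C → EuclideanSpace ℝ (Fin d),
      ∀ ω, 0 < p ω → z1 ω = g (c ω) ∧ z2 ω = g (c ω) :=
  invariance_forces_shared_content_general p hp c cbar1 cbar2 f1 f2 z1 z2 hz1 hz2 hci hinv
end
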